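/- arXiv:1403.5855 — 2 statements merged into one kernel-verified Lean document; each statement's English description precedes it below -/
import Mathlib

section
/- Let c > 0 and let u : ℝ → ℝ be smooth with u'' ≥ c, and suppose u^{(4)} - u'·u''' + 2(u'')² - 6c·u'' ≥ 0 and 3(u''')² ≤ 2(u'' - c)·(u^{(4)} - u'·u''' + 2(u'')² - 6c·u'') pointwise. Then for every smooth f : ℝ → ℝ, the quantity Γ₃(f) = (f''')² + 3u'''·f'·f'' + 3u''·(f'')² + (1/2)(u^{(4)} - u'u''' + 2(u'')²)·(f')² satisfies Γ₃(f) ≥ 3c·[(f'')² + u''·(f')²] pointwise. -/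
lemma quad_form_nonneg (a b A B C : ℝ) (hA : 0 ≤ A) (hC : 0 ≤ C)
    (hD : 3 * B ^ 2 ≤ 2 * A * C) :
    0 ≤ 3 * A * a ^ 2 + 3 * B * a * b + (C / 2) * b ^ 2 := by
  rcases eq_or_lt_of_le hA with h | h
  · have hB : B = 0 := by nlinarith [sq_nonneg B]
    rw [← h, hB]
    have := mul_nonneg hC (sq_nonneg b)
    nlinarith
  · have h4 : 0 ≤ 3 * (2 * A * a + B * b) ^ 2 + (2 * A * C - 3 * B ^ 2) * b ^ 2 := by
      nlinarith [sq_nonneg (2 * A * a + B * b), mul_nonneg (by linarith : (0:ℝ) ≤ 2 * A * C - 3 * B ^ 2) (sq_nonneg b)]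
    have h5 : 0 ≤ 4 * A * (3 * A * a ^ 2 + 3 * B * a * b + (C / 2) * b ^ 2) := by nlinarith
    nlinarith

theorem log_concave_gamma3_bound (c : ℝ) (hc : 0 < c) (u f : ℝ → ℝ)
    (hu : ContDiff ℝ (⊤ : ℕ∞) u) (hf : ContDiff ℝ (⊤ : ℕ∞) f)
    (hconv : ∀ x, c ≤ iteratedDeriv 2 u x)
    (h1 : ∀ x, 0 ≤ iteratedDeriv 4 u x - deriv u x * iteratedDeriv 3 u x
          + 2 * (iteratedDeriv 2 u x) ^ 2 - 6 * c * iteratedDeriv 2 u x)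
    (h2 : ∀ x, 3 * (iteratedDeriv 3 u x) ^ 2 ≤
          2 * (iteratedDeriv 2 u x - c) *
            (iteratedDeriv 4 u x - deriv u x * iteratedDeriv 3 u x
              + 2 * (iteratedDeriv 2 u x) ^ 2 - 6 * c * iteratedDeriv 2 u x)) :
    ∀ x, 3 * c * ((iteratedDeriv 2 f x) ^ 2 + iteratedDeriv 2 u x * (deriv f x) ^ 2)
      ≤ (iteratedDeriv 3 f x) ^ 2
        + 3 * iteratedDeriv 3 u x * deriv f x * iteratedDeriv 2 f x
        + 3 * iteratedDeriv 2 u x * (iteratedDeriv 2 f x) ^ 2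
        + (1 / 2) * (iteratedDeriv 4 u x - deriv u x * iteratedDeriv 3 u x
            + 2 * (iteratedDeriv 2 u x) ^ 2) * (deriv f x) ^ 2 := by
  intro x
  have hA : 0 ≤ iteratedDeriv 2 u x - c := by linarith [hconv x]
  have key := quad_form_nonneg (iteratedDeriv 2 f x) (deriv f x)
    (iteratedDeriv 2 u x - c) (iteratedDeriv 3 u x)
    (iteratedDeriv 4 u x - deriv u x * iteratedDeriv 3 u x
      + 2 * (iteratedDeriv 2 u x) ^ 2 - 6 * c * iteratedDeriv 2 u x)
    hA (h1 x) (h2 x)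
  nlinarith [sq_nonneg (iteratedDeriv 3 f x)]
end

section
/- Let A, D ≥ 0, κ ∈ (0, 1/4), and S > 0. Suppose H ≥ 0 satisfies, for every u > 0, H ≤ (A + D)/(1 - 4κ) · (1 - e^{-2u})^{1-4κ} - (S²/2)·log(1 - e^{-2u}). Then H ≤ (S²/(2(1-4κ))) · Ψ(2(A+D)/S²), where Ψ(r) = r for 0 ≤ r ≤ 1 and Ψ(r) = 1 + log r for r ≥ 1. -/
noncomputable def Psi (r : ℝ) : ℝ := if r ≤ 1 then r else 1 + Real.log r

theorem entropy_optimization_Psi (A D κ S H : ℝ)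
    (hA : 0 ≤ A) (hD : 0 ≤ D) (hκ : κ ∈ Set.Ioo (0 : ℝ) (1 / 4)) (hS : 0 < S) (hH : 0 ≤ H)
    (hbound : ∀ u > (0 : ℝ),
      H ≤ (A + D) / (1 - 4 * κ) * (1 - Real.exp (-2 * u)) ^ (1 - 4 * κ)
            - S ^ 2 / 2 * Real.log (1 - Real.exp (-2 * u))) :
    H ≤ S ^ 2 / (2 * (1 - 4 * κ)) * Psi (2 * (A + D) / S ^ 2) := by
  obtain ⟨hκ0, hκ4⟩ := hκ
  have hα0 : 0 < 1 - 4 * κ := by linarith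
  set α : ℝ := 1 - 4 * κ with hα
  have hbx : ∀ x ∈ Set.Ioo (0:ℝ) 1,
      H ≤ (A + D) / α * x ^ α - S ^ 2 / 2 * Real.log x := by
    rintro x ⟨hx0, hx1⟩
    have h1x : 0 < 1 - x := by linarith
    have hulog : Real.log (1 - x) < 0 := Real.log_neg h1x (by linarith)
    set u : ℝ := -Real.log (1 - x) / 2 with hu
    have hupos : 0 < u := by rw [hu]; linarith
    have h2u : -2 * u = Real.log (1 - x) := by rw [hu]; ring
    have hexp : Real.exp (-2 * u) = 1 - x := by rw [h2u, Real.exp_log h1x]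
    have h := hbound u hupos
    rw [hexp] at h
    simpa [sub_sub_cancel] using h
  by_cases hr : 2 * (A + D) / S ^ 2 ≤ 1
  · have hPsi : Psi (2 * (A + D) / S ^ 2) = 2 * (A + D) / S ^ 2 := if_pos hr
    rw [hPsi]
    have hgoal : S ^ 2 / (2 * α) * (2 * (A + D) / S ^ 2) = (A + D) / α := by
      field_simp
    rw [hgoal]
    have hcontAt : ContinuousAt (fun x : ℝ => (A + D) / α * x ^ α - S ^ 2 / 2 * Real.log x) 1 := by
      apply ContinuousAt.sub
      · exact continuousAt_const.mul (Real.continuousAt_rpow_const 1 α (Or.inl one_ne_zero))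
      · exact continuousAt_const.mul (Real.continuousAt_log one_ne_zero)
    have htend : Filter.Tendsto (fun x : ℝ => (A + D) / α * x ^ α - S ^ 2 / 2 * Real.log x)
        (nhdsWithin 1 (Set.Iio (1:ℝ))) (nhds ((A + D) / α)) := by
      have h := (hcontAt.continuousWithinAt (s := Set.Iio (1:ℝ))).tendsto
      simpa [Real.one_rpow, Real.log_one] using h
    refine ge_of_tendsto htend ?_
    have hmem : Set.Ioo (0:ℝ) 1 ∈ nhdsWithin (1:ℝ) (Set.Iio 1) :=
      Ioo_mem_nhdsLT_of_mem (by norm_num : (1:ℝ) ∈ Set.Ioc (0:ℝ) 1)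
    filter_upwards [hmem] with x hx
    exact hbx x hx
  · push_neg at hr
    have hS2 : 0 < S ^ 2 := by positivity
    have hAD : 0 < A + D := by nlinarith [(one_lt_div hS2).mp hr]
    set r := 2 * (A + D) / S ^ 2 with hrdef
    have hr1 : 1 < r := hr
    have hr0 : 0 < r := lt_trans one_pos hr1
    have hPsi : Psi r = 1 + Real.log r := if_neg (not_le.mpr hr1)
    set x := r ^ (-(1 / α)) with hx
    have hx0 : 0 < x := Real.rpow_pos_of_pos hr0 _
    have hx1 : x < 1 := Real.rpow_lt_one_of_one_lt_of_neg hr1 (by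
      have : 0 < 1 / α := by positivity
      linarith)
    have hxα : x ^ α = r⁻¹ := by
      rw [hx, ← Real.rpow_mul hr0.le]
      rw [show -(1 / α) * α = -1 by field_simp]
      exact Real.rpow_neg_one r
    have hlogx : Real.log x = -(1 / α) * Real.log r := Real.log_rpow hr0 _
    have hb := hbx x ⟨hx0, hx1⟩
    rw [hxα, hlogx] at hb
    rw [hPsi]
    have hrinv : r⁻¹ = S ^ 2 / (2 * (A + D)) := by
      rw [hrdef]; field_simp
    calc H ≤ (A + D) / α * r⁻¹ - S ^ 2 / 2 * (-(1 / α) * Real.log r) := hb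
      _ = S ^ 2 / (2 * α) * (1 + Real.log r) := by
          rw [hrinv]; field_simp; ring
end
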